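/- If ε<c, the all-defector equilibrium (0,1,0,0) is locally asymptotically stable for the four-strategy replicator dynamics: two Jacobian eigenvalues equal ε−c<0, and on the one-dimensional center manifold (parametrized by x with y=1−x, z=w=0) the dynamics satisfy ẋ = (1−b)x² + O(x³), so that x decreases to 0 for small x>0 since b>1. -/

import Mathlib

/-!
Every coordinate slice of the replicator field through `(0, 1, 0)` is a cubic, so the Jacobian
there can be read off entry by entry: it is lower triangular with diagonal `(0, ε - c, ε - c)`.
The edge `y = 1 - x`, `z = 0` is invariant, and on it the field is `-(b - 1) x² (1 - x)`, negative
on `(0, 1)` when `b > 1`.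
-/

noncomputable section

/-- Reduced replicator vector field of the reputation-based voluntary Prisoner's
Dilemma: state `p = (x, y, z)` with `w = 1 - x - y - z` eliminated; payoffs
`Π_C = x+z`, `Π_D = bx`, `Π_CE = (x+z)(1-c)+(y+w)(ε-c)`,
`Π_DE = x(b-c)-zc+(y+w)(ε-c)`; dynamics `ẋ = x(Π_C − Π̄)`, etc. -/
def repField (b c ε : ℝ) (p : Fin 3 → ℝ) : Fin 3 → ℝ :=
  let x := p 0
  let y := p 1
  let z := p 2
  let w := 1 - x - y - z
  let PC := x + z
  let PD := b * x
  let PCE := (x + z) * (1 - c) + (y + w) * (ε - c)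
  let PDE := x * (b - c) - z * c + (y + w) * (ε - c)
  let Pbar := x * PC + y * PD + z * PCE + w * PDE
  ![x * (PC - Pbar), y * (PD - Pbar), z * (PCE - Pbar)]

/-- Jacobian matrix of the reduced replicator field at `p`,
entry `(i, j)` being the partial derivative of the `i`-th component
with respect to the `j`-th variable. -/
def jac (b c ε : ℝ) (p : Fin 3 → ℝ) : Matrix (Fin 3) (Fin 3) ℝ :=
  fun i j => deriv (fun t : ℝ => repField b c ε (Function.update p j t) i) (p j)

lemma deriv_cubic (a₃ a₂ a₁ a₀ t : ℝ) :
    deriv (fun s : ℝ => a₃ * s ^ 3 + a₂ * s ^ 2 + a₁ * s + a₀) t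
      = 3 * a₃ * t ^ 2 + 2 * a₂ * t + a₁ := by
  have h : HasDerivAt (fun s : ℝ => a₃ * s ^ 3 + a₂ * s ^ 2 + a₁ * s + a₀)
      (a₃ * ((3 : ℕ) * t ^ 2) + a₂ * ((2 : ℕ) * t ^ 1) + a₁ * 1 + 0) t :=
    ((((hasDerivAt_pow 3 t).const_mul a₃).add ((hasDerivAt_pow 2 t).const_mul a₂)).add
      ((hasDerivAt_id t).const_mul a₁)).add (hasDerivAt_const t a₀)
  rw [h.deriv]
  push_cast
  ring

lemma jac_apply_of_cubic {b c ε : ℝ} {p : Fin 3 → ℝ} {i j : Fin 3} (a₃ a₂ a₁ a₀ : ℝ)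
    (h : ∀ t, repField b c ε (Function.update p j t) i = a₃ * t ^ 3 + a₂ * t ^ 2 + a₁ * t + a₀) :
    jac b c ε p i j = 3 * a₃ * p j ^ 2 + 2 * a₂ * p j + a₁ := by
  rw [jac, funext h, deriv_cubic]

lemma jac_allDefector (b c ε : ℝ) :
    jac b c ε ![0, 1, 0] = !![0, 0, 0; ε - c, ε - c, 0; 0, 0, ε - c] := by
  ext i j
  fin_cases i <;> fin_cases j <;>
    [rw [jac_apply_of_cubic (b - ε - 1) (1 - b + ε - c) 0 0];
     rw [jac_apply_of_cubic 0 0 0 0];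
     rw [jac_apply_of_cubic 0 0 0 0];
     rw [jac_apply_of_cubic 0 (b - 1 - ε) (ε - c) 0];
     rw [jac_apply_of_cubic 0 (ε - c) (c - ε) 0];
     rw [jac_apply_of_cubic 0 (-1) 0 0];
     rw [jac_apply_of_cubic 0 0 0 0];
     rw [jac_apply_of_cubic 0 0 0 0];
     rw [jac_apply_of_cubic (-1) (1 - ε) (ε - c) 0]]
  all_goals
    try intro t
    simp only [repField, Function.update, Fin.zero_eta, Fin.mk_one, Fin.reduceFinMk, Fin.isValue,
      Fin.reduceEq, zero_ne_one, one_ne_zero, ↓reduceDIte, Matrix.of_apply, Matrix.cons_val',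
      Matrix.cons_val_fin_one, Matrix.cons_val, Matrix.cons_val_zero, Matrix.cons_val_one]
    ring

open Polynomial in
lemma charpoly_jac_allDefector (b c ε : ℝ) :
    (jac b c ε ![0, 1, 0]).charpoly = X * (X - C (ε - c)) ^ 2 := by
  rw [jac_allDefector, ← Matrix.charpoly_transpose, Matrix.charpoly_of_isUpperTriangular,
    Fin.prod_univ_three]
  · simp only [Matrix.transpose_apply, Matrix.of_apply, Matrix.cons_val', Matrix.cons_val_fin_one,
      Matrix.cons_val, Matrix.cons_val_zero, Matrix.cons_val_one, map_zero, map_sub, sub_zero]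
    ring
  · intro i j hij
    fin_cases i <;> fin_cases j <;> simp_all

lemma repField_centerManifold (b c ε x : ℝ) :
    repField b c ε ![x, 1 - x, 0] 0 = (1 - b) * x ^ 2 + (b - 1) * x ^ 3 := by
  simp only [repField, Matrix.cons_val, Matrix.cons_val_zero, Matrix.cons_val_one]
  ring

lemma centerManifold_flow_neg {b x : ℝ} (hb : 1 < b) (hx₀ : 0 < x) (hx₁ : x < 1) :
    (1 - b) * x ^ 2 + (b - 1) * x ^ 3 < 0 := by
  have hpos : 0 < (b - 1) * x ^ 2 * (1 - x) :=
    mul_pos (mul_pos (sub_pos.mpr hb) (pow_pos hx₀ 2)) (sub_pos.mpr hx₁)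
  linarith

open Polynomial in
theorem allD_stable_when_eps_lt_c_general (b c ε : ℝ) (hb1 : 1 < b) (hec : ε < c) :
    (jac b c ε ![0, 1, 0]).charpoly = X * (X - C (ε - c)) ^ 2 ∧
    ε - c < 0 ∧
    (∀ x : ℝ, repField b c ε ![x, 1 - x, 0] 0
        = (1 - b) * x ^ 2 + (b - 1) * x ^ 3) ∧
    ∃ δ : ℝ, 0 < δ ∧ ∀ x : ℝ, 0 < x → x < δ →
      repField b c ε ![x, 1 - x, 0] 0 < 0 := by
  refine ⟨charpoly_jac_allDefector b c ε, sub_neg.mpr hec, repField_centerManifold b c ε,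
    1, one_pos, fun x hx₀ hx₁ => ?_⟩
  rw [repField_centerManifold]
  exact centerManifold_flow_neg hb1 hx₀ hx₁

open Polynomial in
/-- If `ε < c`, the all-defector equilibrium `(0,1,0,0)` is locally
asymptotically stable: two Jacobian eigenvalues equal `ε − c < 0`
(the characteristic polynomial is `X (X − (ε−c))²`), and on the
one-dimensional center manifold (parametrized by `x`, with `y = 1−x`,
`z = w = 0`) the dynamics satisfy `ẋ = (1−b)x² + (b−1)x³`, which is
negative for small `x > 0` since `b > 1`, so `x` decreases to `0`. -/
theorem allD_stable_when_eps_lt_c (b c ε : ℝ) (hb1 : 1 < b) (hb2 : b ≤ 2)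
    (hc0 : 0 < c) (hc1 : c < 1) (he0 : 0 < ε) (he1 : ε < 1) (hec : ε < c) :
    (jac b c ε ![0, 1, 0]).charpoly = X * (X - C (ε - c)) ^ 2 ∧
    ε - c < 0 ∧
    (∀ x : ℝ, repField b c ε ![x, 1 - x, 0] 0
        = (1 - b) * x ^ 2 + (b - 1) * x ^ 3) ∧
    ∃ δ : ℝ, 0 < δ ∧ ∀ x : ℝ, 0 < x → x < δ →
      repField b c ε ![x, 1 - x, 0] 0 < 0 :=
  allD_stable_when_eps_lt_c_general b c ε hb1 hec
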